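/- For every connection form ωᴳ adapted to v there exists a unique pair (ωˢ, F) such that ωᴳ = ωˢ + F, where ωˢ is a semi-teleparallel connection form with respect to {v, b₁, b₂, b₃} and F : V → End(V) is linear with each F(u) η-skew, F(u)v = 0 for all u ∈ V, and F(bᵢ) = 0 for i = 1,2,3. Moreover, F is given explicitly by F(u)x = η(v,u) · Σᵢ η(Dᴳbᵢ(v), x)·bᵢ, where Dᴳbᵢ(v) = dbᵢ(v) + ωᴳ(v)bᵢ. -/

import Mathlib

/-!
Work in the frame `{v, b₁, b₂, b₃}`. Adaptedness and the compatibility of the frame derivatives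
make `Dᵢ := Dᴳbᵢ(v)` orthogonal to `v` with `η(bᵢ, Dⱼ)` antisymmetric in `i, j`. Hence
`T x := Σᵢ η(Dᵢ, x) bᵢ` is η-skew with `T v = 0` and `T bⱼ = -Dⱼ`, and `F(u) := η(v, u) T` gives
the decomposition. Conversely an admissible `F` is fixed by linearity: `F(bᵢ) = 0`, `F(v)v = 0`,
and `F(v)bᵢ = Dᵢ` is forced by `Dˢbᵢ(v) = 0`.
-/

open Finset

/- Minkowski space V = ℝ⁴ with bilinear form η. -/
abbrev V4 := Fin 4 → ℝ

def eta (x y : V4) : ℝ := -(x 0 * y 0) + x 1 * y 1 + x 2 * y 2 + x 3 * y 3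

/-- `f : V → V` is linear. -/
def IsLin (f : V4 → V4) : Prop :=
  (∀ x y, f (x + y) = f x + f y) ∧ ∀ (c : ℝ) (x : V4), f (c • x) = c • f x

/-- `f` is η-skew: η(f x, y) = −η(x, f y). -/
def IsSkew (f : V4 → V4) : Prop := ∀ x y, eta (f x) y = - eta x (f y)

/-- A connection form: a linear map `ω : V → End V` with each `ω u` η-skew. -/
def ConnForm (ω : V4 → V4 → V4) : Prop :=
  (∀ u u', ω (u + u') = ω u + ω u') ∧ (∀ (c : ℝ) (u : V4), ω (c • u) = c • ω u) ∧
  (∀ u, IsLin (ω u)) ∧ (∀ u, IsSkew (ω u))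

/-- `ω` is adapted to `v`: `Dωv(u) = dv(u) + ω(u)v = 0` for all `u`. -/
def Adapted (v : V4) (dv : V4 → V4) (ω : V4 → V4 → V4) : Prop :=
  ∀ u, dv u + ω u v = 0

/-- `ω` is semi-teleparallel w.r.t. the frame `{v, b₁, b₂, b₃}`:
adapted to `v` and `Dωbᵢ(v) = dbᵢ(v) + ω(v)bᵢ = 0`. -/
def SemiTeleparallel (v : V4) (dv : V4 → V4) (b : Fin 3 → V4) (db : Fin 3 → V4 → V4)
    (ω : V4 → V4 → V4) : Prop :=
  Adapted v dv ω ∧ ∀ i, db i v + ω v (b i) = 0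

/-- The pair `(ωˢ, F)` decomposes the adapted connection `ωᴳ`: `ωˢ` is a semi-teleparallel
connection form, `F : V → End V` is linear, each `F u` is η-skew, `F(u)v = 0`,
`F(bᵢ) = 0`, and `ωᴳ = ωˢ + F`. -/
def GoodPairST (v : V4) (dv : V4 → V4) (b : Fin 3 → V4) (db : Fin 3 → V4 → V4)
    (ωG : V4 → V4 → V4) (p : (V4 → V4 → V4) × (V4 → V4 → V4)) : Prop :=
  ConnForm p.1 ∧ SemiTeleparallel v dv b db p.1 ∧
  (∀ u u', p.2 (u + u') = p.2 u + p.2 u') ∧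
  (∀ (c : ℝ) (u : V4), p.2 (c • u) = c • p.2 u) ∧
  (∀ u, IsLin (p.2 u)) ∧ (∀ u, IsSkew (p.2 u)) ∧
  (∀ u, p.2 u v = 0) ∧ (∀ i, ∀ x, p.2 (b i) x = 0) ∧
  (∀ u x, ωG u x = p.1 u x + p.2 u x)

lemma eta_comm (x y : V4) : eta x y = eta y x := by
  unfold eta; ring

lemma eta_add_left (x y z : V4) : eta (x + y) z = eta x z + eta y z := by
  simp only [eta, Pi.add_apply]; ring

lemma eta_add_right (x y z : V4) : eta x (y + z) = eta x y + eta x z := by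
  simp only [eta, Pi.add_apply]; ring

lemma eta_smul_left (c : ℝ) (x y : V4) : eta (c • x) y = c * eta x y := by
  simp only [eta, Pi.smul_apply, smul_eq_mul]; ring

lemma eta_smul_right (c : ℝ) (x y : V4) : eta x (c • y) = c * eta x y := by
  simp only [eta, Pi.smul_apply, smul_eq_mul]; ring

lemma eta_neg_left (x y : V4) : eta (-x) y = -eta x y := by
  simp only [eta, Pi.neg_apply]; ring

lemma eta_neg_right (x y : V4) : eta x (-y) = -eta x y := by
  simp only [eta, Pi.neg_apply]; ring

lemma eta_sub_left (x y z : V4) : eta (x - y) z = eta x z - eta y z := by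
  simp only [eta, Pi.sub_apply]; ring

lemma eta_sub_right (x y z : V4) : eta x (y - z) = eta x y - eta x z := by
  simp only [eta, Pi.sub_apply]; ring

def etaForm : LinearMap.BilinForm ℝ V4 :=
  LinearMap.mk₂ ℝ eta eta_add_left eta_smul_left eta_add_right eta_smul_right

@[simp]
lemma etaForm_apply (x y : V4) : etaForm x y = eta x y := rfl

lemma eta_sum_right {ι : Type*} (s : Finset ι) (x : V4) (f : ι → V4) :
    eta x (∑ i ∈ s, f i) = ∑ i ∈ s, eta x (f i) :=
  map_sum (etaForm x) f s

lemma eta_sum_left {ι : Type*} (s : Finset ι) (f : ι → V4) (x : V4) :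
    eta (∑ i ∈ s, f i) x = ∑ i ∈ s, eta (f i) x := by
  simp only [eta_comm _ x, eta_sum_right]

lemma eq_zero_of_forall_eta_eq_zero {r : V4} (h : ∀ y, eta y r = 0) : r = 0 := by
  funext k
  have hk := h (Pi.single k 1)
  fin_cases k <;> simpa [eta] using hk

structure IsOrthonormalFrame (v : V4) (b : Fin 3 → V4) : Prop where
  eta_self : eta v v = -1
  eta_frame : ∀ i j, eta (b i) (b j) = if i = j then 1 else 0
  eta_orth : ∀ i, eta v (b i) = 0

namespace IsOrthonormalFrame

variable {v : V4} {b : Fin 3 → V4}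

lemma iIsOrtho (hf : IsOrthonormalFrame v b) : etaForm.iIsOrtho (Matrix.vecCons v b) := by
  rw [LinearMap.BilinForm.iIsOrtho_def]
  intro i j hij
  cases i using Fin.cases <;> cases j using Fin.cases
  · exact absurd rfl hij
  · simpa using hf.eta_orth _
  · simpa [eta_comm] using hf.eta_orth _
  · simpa [hf.eta_frame, Fin.succ_inj] using hij

lemma span_eq_top (hf : IsOrthonormalFrame v b) :
    Submodule.span ℝ (Set.range (Matrix.vecCons v b)) = ⊤ := by
  refine LinearIndependent.span_eq_top_of_card_eq_finrank
    (LinearMap.BilinForm.linearIndependent_of_iIsOrtho hf.iIsOrtho fun i => ?_) (by simp)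
  cases i using Fin.cases <;> simp [hf.eta_self, hf.eta_frame]

lemma eq_zero_of_eta_eq_zero (hf : IsOrthonormalFrame v b) {r : V4} (hv : eta v r = 0)
    (hb : ∀ i, eta (b i) r = 0) : r = 0 := by
  have hφ : etaForm.flip r = 0 := by
    refine LinearMap.ext_on_range hf.span_eq_top fun i => ?_
    cases i using Fin.cases <;> simp [hv, hb]
  exact eq_zero_of_forall_eta_eq_zero fun y => LinearMap.congr_fun hφ y

lemma expansion (hf : IsOrthonormalFrame v b) (x : V4) :
    x = (-eta v x) • v + ∑ j, eta (b j) x • b j := by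
  refine (sub_eq_zero.mp (hf.eq_zero_of_eta_eq_zero ?_ fun i => ?_)).symm <;>
    simp [eta_sub_right, eta_add_right, eta_neg_right, eta_smul_right, eta_sum_right,
      hf.eta_self, hf.eta_frame, hf.eta_orth, eta_comm _ v]

lemma map_expansion (hf : IsOrthonormalFrame v b) {M : Type*} [AddCommGroup M] [Module ℝ M]
    {f : V4 → M} (hadd : ∀ x y, f (x + y) = f x + f y) (hsmul : ∀ (c : ℝ) x, f (c • x) = c • f x)
    (x : V4) : f x = (-eta v x) • f v + ∑ j, eta (b j) x • f (b j) := by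
  let φ : V4 →ₗ[ℝ] M := ⟨⟨f, hadd⟩, hsmul⟩
  calc f x = φ ((-eta v x) • v + ∑ j, eta (b j) x • b j) := congrArg φ (hf.expansion x)
    _ = _ := by simp only [map_add, map_smul, map_sum]; rfl

lemma eq_sum_of_eta_eq_zero (hf : IsOrthonormalFrame v b) {w : V4} (hw : eta v w = 0) :
    w = ∑ j, eta (b j) w • b j := by
  simpa [hw] using hf.expansion w

end IsOrthonormalFrame

def outerSum (b D : Fin 3 → V4) (x : V4) : V4 := ∑ i, eta (D i) x • b i

lemma outerSum_isLin (b D : Fin 3 → V4) : IsLin (outerSum b D) := by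
  constructor
  · intro x y
    simp only [outerSum, eta_add_right, add_smul, Finset.sum_add_distrib]
  · intro c x
    simp only [outerSum, eta_smul_right, mul_smul, Finset.smul_sum]

lemma outerSum_eq_zero {b D : Fin 3 → V4} {w : V4} (h : ∀ i, eta (D i) w = 0) :
    outerSum b D w = 0 :=
  Finset.sum_eq_zero fun i _ => by rw [h, zero_smul]

section Antisymmetric

variable {v : V4} {b D : Fin 3 → V4}

lemma outerSum_apply_frame (hf : IsOrthonormalFrame v b) (hvD : ∀ i, eta v (D i) = 0)
    (hD : ∀ i j, eta (b i) (D j) = -eta (b j) (D i)) (j : Fin 3) : outerSum b D (b j) = -D j := by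
  conv_rhs => rw [hf.eq_sum_of_eta_eq_zero (hvD j)]
  simp only [outerSum, eta_comm (D _), hD j, neg_smul, Finset.sum_neg_distrib]

lemma outerSum_eq_neg_sum (hf : IsOrthonormalFrame v b) (hvD : ∀ i, eta v (D i) = 0)
    (hD : ∀ i j, eta (b i) (D j) = -eta (b j) (D i)) (x : V4) :
    outerSum b D x = -∑ j, eta (b j) x • D j := by
  have hv : outerSum b D v = 0 := outerSum_eq_zero fun i => by rw [eta_comm, hvD]
  rw [hf.map_expansion (outerSum_isLin b D).1 (outerSum_isLin b D).2 x, hv]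
  simp [outerSum_apply_frame hf hvD hD]

lemma outerSum_isSkew (hf : IsOrthonormalFrame v b) (hvD : ∀ i, eta v (D i) = 0)
    (hD : ∀ i j, eta (b i) (D j) = -eta (b j) (D i)) : IsSkew (outerSum b D) := by
  intro x y
  rw [outerSum_eq_neg_sum hf hvD hD y, outerSum, eta_neg_right, neg_neg, eta_sum_left,
    eta_sum_right]
  refine Finset.sum_congr rfl fun i _ => ?_
  rw [eta_smul_left, eta_smul_right, eta_comm x, mul_comm]

end Antisymmetric

lemma ConnForm.sub {ω ω' : V4 → V4 → V4} (hω : ConnForm ω) (hω' : ConnForm ω') :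
    ConnForm (ω - ω') := by
  obtain ⟨hadd, hsmul, hlin, hskew⟩ := hω
  obtain ⟨hadd', hsmul', hlin', hskew'⟩ := hω'
  refine ⟨fun u u' => ?_, fun c u => ?_, fun u => ⟨fun x y => ?_, fun c x => ?_⟩, fun u x y => ?_⟩
  · simp only [Pi.sub_apply, hadd, hadd']; abel
  · simp only [Pi.sub_apply, hsmul, hsmul', smul_sub]
  · simp only [Pi.sub_apply, (hlin u).1, (hlin' u).1]; abel
  · simp only [Pi.sub_apply, (hlin u).2, (hlin' u).2, smul_sub]
  · simp only [Pi.sub_apply, eta_sub_left, eta_sub_right, hskew u x y, hskew' u x y]; ring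

lemma connForm_eta_smul {T : V4 → V4} (hT : IsLin T) (hTskew : IsSkew T) (w : V4) :
    ConnForm fun u => eta w u • T := by
  refine ⟨fun u u' => ?_, fun c u => ?_, fun u => ⟨fun x y => ?_, fun c x => ?_⟩, fun u x y => ?_⟩
  · simp only [eta_add_right, add_smul]
  · simp only [eta_smul_right, mul_smul]
  · simp only [Pi.smul_apply, hT.1, smul_add]
  · simp only [Pi.smul_apply, hT.2, smul_comm c]
  · simp only [Pi.smul_apply, eta_smul_left, eta_smul_right, hTskew x y]; ring

def covDeriv (ω : V4 → V4 → V4) (db : Fin 3 → V4 → V4) (b : Fin 3 → V4) (u : V4) (i : Fin 3) :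
    V4 :=
  db i u + ω u (b i)

lemma eta_covDeriv_of_adapted {v : V4} {dv : V4 → V4} {b : Fin 3 → V4} {db : Fin 3 → V4 → V4}
    {ω : V4 → V4 → V4} {u : V4} {i : Fin 3} (hω : Adapted v dv ω) (hskew : IsSkew (ω u))
    (hcompat1 : eta v (db i u) + eta (b i) (dv u) = 0) : eta v (covDeriv ω db b u i) = 0 := by
  have hωv : ω u v = -dv u := eq_neg_of_add_eq_zero_right (hω u)
  have := hskew v (b i)
  rw [hωv, eta_neg_left, eta_comm] at this
  rw [covDeriv, eta_add_right]
  linarith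

lemma eta_covDeriv_antisymm {b : Fin 3 → V4} {db : Fin 3 → V4 → V4} {ω : V4 → V4 → V4} {u : V4}
    (hskew : IsSkew (ω u)) (hcompat2 : ∀ i j, eta (b i) (db j u) + eta (b j) (db i u) = 0)
    (i j : Fin 3) : eta (b i) (covDeriv ω db b u j) = -eta (b j) (covDeriv ω db b u i) := by
  have := hskew (b j) (b i)
  rw [eta_comm _ (b i)] at this
  simp only [covDeriv, eta_add_right]
  linarith [hcompat2 i j]

section Decomposition

variable {v : V4} {dv : V4 → V4} {b : Fin 3 → V4} {db : Fin 3 → V4 → V4} {ωG : V4 → V4 → V4}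

lemma goodPairST_sub (hf : IsOrthonormalFrame v b) (hωG : ConnForm ωG)
    (hadapted : Adapted v dv ωG) (hvD : ∀ i, eta v (covDeriv ωG db b v i) = 0)
    (hD : ∀ i j, eta (b i) (covDeriv ωG db b v j) = -eta (b j) (covDeriv ωG db b v i)) :
    GoodPairST v dv b db ωG
      (ωG - fun u => eta v u • outerSum b (covDeriv ωG db b v),
        fun u => eta v u • outerSum b (covDeriv ωG db b v)) := by
  have hF := connForm_eta_smul (outerSum_isLin b _) (outerSum_isSkew hf hvD hD) v
  have hTv : outerSum b (covDeriv ωG db b v) v = 0 :=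
    outerSum_eq_zero fun i => by rw [eta_comm, hvD]
  refine ⟨hωG.sub hF, ⟨fun u => ?_, fun i => ?_⟩, hF.1, hF.2.1, hF.2.2.1, hF.2.2.2,
    fun u => ?_, fun i x => ?_, fun u x => ?_⟩
  · simpa [hTv] using hadapted u
  · simp [hf.eta_self, outerSum_apply_frame hf hvD hD, covDeriv]
  · simp [hTv]
  · simp [hf.eta_orth]
  · simp

lemma GoodPairST.snd_apply (hf : IsOrthonormalFrame v b)
    (hvD : ∀ i, eta v (covDeriv ωG db b v i) = 0)
    (hD : ∀ i j, eta (b i) (covDeriv ωG db b v j) = -eta (b j) (covDeriv ωG db b v i))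
    {p : (V4 → V4 → V4) × (V4 → V4 → V4)} (hp : GoodPairST v dv b db ωG p) (u x : V4) :
    p.2 u x = eta v u • outerSum b (covDeriv ωG db b v) x := by
  obtain ⟨-, ⟨-, hst⟩, hadd, hsmul, hlin, -, hv0, hb0, hsum⟩ := hp
  have hframe : ∀ i, p.2 v (b i) = covDeriv ωG db b v i := fun i => by
    rw [covDeriv, hsum, ← add_assoc, hst i, zero_add]
  have hv : p.2 v x = -outerSum b (covDeriv ωG db b v) x := by
    rw [hf.map_expansion (hlin v).1 (hlin v).2 x, outerSum_eq_neg_sum hf hvD hD x, hv0]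
    simp [hframe]
  have hu : p.2 u = (-eta v u) • p.2 v := by
    have hb0' : ∀ j, p.2 (b j) = 0 := fun j => funext (hb0 j)
    simpa [hb0'] using hf.map_expansion hadd hsmul u
  rw [hu, Pi.smul_apply, hv, smul_neg, neg_smul, neg_neg]

lemma GoodPairST.fst_eq_sub {p : (V4 → V4 → V4) × (V4 → V4 → V4)}
    (hp : GoodPairST v dv b db ωG p) : p.1 = ωG - p.2 := by
  obtain ⟨-, -, -, -, -, -, -, -, hsum⟩ := hp
  funext u x
  simp [hsum]

end Decomposition

theorem statement3_general (v : V4) (hv : eta v v = -1)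
    (dv : V4 → V4)
    (b : Fin 3 → V4) (hb : ∀ i j, eta (b i) (b j) = if i = j then 1 else 0)
    (hvb : ∀ i, eta v (b i) = 0)
    (db : Fin 3 → V4 → V4)
    (hcompat1 : ∀ i u, eta v (db i u) + eta (b i) (dv u) = 0)
    (hcompat2 : ∀ i j u, eta (b i) (db j u) + eta (b j) (db i u) = 0)
    (ωG : V4 → V4 → V4) (hωG : ConnForm ωG) (hadapted : Adapted v dv ωG) :
    (∃! p : (V4 → V4 → V4) × (V4 → V4 → V4), GoodPairST v dv b db ωG p) ∧
    (∀ p : (V4 → V4 → V4) × (V4 → V4 → V4), GoodPairST v dv b db ωG p →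
      ∀ u x, p.2 u x = eta v u • ∑ i : Fin 3, eta (db i v + ωG v (b i)) x • b i) := by
  have hf : IsOrthonormalFrame v b := ⟨hv, hb, hvb⟩
  have hvD : ∀ i, eta v (covDeriv ωG db b v i) = 0 := fun i =>
    eta_covDeriv_of_adapted hadapted (hωG.2.2.2 v) (hcompat1 i v)
  have hD := eta_covDeriv_antisymm (hωG.2.2.2 v) fun i j => hcompat2 i j v
  have hformula := fun p (hp : GoodPairST v dv b db ωG p) => hp.snd_apply hf hvD hD
  refine ⟨⟨_, goodPairST_sub hf hωG hadapted hvD hD, fun q hq => ?_⟩, hformula⟩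
  have hq2 : q.2 = fun u => eta v u • outerSum b (covDeriv ωG db b v) :=
    funext fun u => funext (hformula q hq u)
  exact Prod.ext (by rw [hq.fst_eq_sub, hq2]) hq2

/-- Every connection form `ωᴳ` adapted to `v` decomposes uniquely as
`ωᴳ = ωˢ + F` with `ωˢ` semi-teleparallel w.r.t. `{v, b₁, b₂, b₃}` and `F` as above;
moreover `F(u)x = η(v,u)·Σᵢ η(Dᴳbᵢ(v),x)·bᵢ`, where `Dᴳbᵢ(v) = dbᵢ(v) + ωᴳ(v)bᵢ`. -/
theorem statement3 (v : V4) (hv : eta v v = -1)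
    (dv : V4 → V4) (hdvlin : IsLin dv) (hdvorth : ∀ u, eta v (dv u) = 0)
    (b : Fin 3 → V4) (hb : ∀ i j, eta (b i) (b j) = if i = j then 1 else 0)
    (hvb : ∀ i, eta v (b i) = 0)
    (db : Fin 3 → V4 → V4) (hdblin : ∀ i, IsLin (db i))
    (hcompat1 : ∀ i u, eta v (db i u) + eta (b i) (dv u) = 0)
    (hcompat2 : ∀ i j u, eta (b i) (db j u) + eta (b j) (db i u) = 0)
    (ωG : V4 → V4 → V4) (hωG : ConnForm ωG) (hadapted : Adapted v dv ωG) :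
    (∃! p : (V4 → V4 → V4) × (V4 → V4 → V4), GoodPairST v dv b db ωG p) ∧
    (∀ p : (V4 → V4 → V4) × (V4 → V4 → V4), GoodPairST v dv b db ωG p →
      ∀ u x, p.2 u x = eta v u • ∑ i : Fin 3, eta (db i v + ωG v (b i)) x • b i) :=
  statement3_general v hv dv b hb hvb db hcompat1 hcompat2 ωG hωG hadapted
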